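/- arXiv:1404.3772 — 7 statements merged into one kernel-verified Lean document; each statement's English description precedes it below -/
import Mathlib

section
/- Let p be a prime, α < β in (0,1], and suppose β = a/b with b coprime to p. Set Δ_e := p^e⟨β⟩_e − p^e⟨α⟩_e, let ℓ := min{e : Δ_e ≥ 1}, and let s be the multiplicative order of p modulo b. Then for every k ≥ 0, Δ_{ℓ+s+k} ≥ p^k + 1. -/
open MvPolynomial

/-- The `e`-th truncation of the non-terminating base `p` expansion of `α ∈ (0,1]`:
the unique multiple of `p^{-e}` with `⟨α⟩_e < α ≤ ⟨α⟩_e + p^{-e}`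
(with the convention `⟨α⟩_e = 0` for `α ≤ 0`). -/
noncomputable def trunc (p e : ℕ) (α : ℝ) : ℝ :=
  if α ≤ 0 then 0 else (⌈α * (p : ℝ) ^ e⌉ - 1) / (p : ℝ) ^ e

/-- The `e`-th digit (`e ≥ 1`) of the non-terminating base `p` expansion of `α ∈ (0,1]`,
namely `p^e ⟨α⟩_e - p^e ⟨α⟩_{e-1}`. -/
noncomputable def digit (p e : ℕ) (α : ℝ) : ℤ :=
  (⌈α * (p : ℝ) ^ e⌉ - 1) - p * (⌈α * (p : ℝ) ^ (e - 1)⌉ - 1)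

/-- Least positive residue of `m` modulo `b`: the unique `r` with `1 ≤ r ≤ b`, `r ≡ m (mod b)`. -/
def lpr (m b : ℤ) : ℤ := if m % b = 0 then b else m % b

/-- The `e`-th Frobenius power `m^{[p^e]} = (x_1^{p^e}, …, x_n^{p^e})`. -/
noncomputable def frobPow (p n : ℕ) (K : Type*) [Field K] (e : ℕ) :
    Ideal (MvPolynomial (Fin n) K) :=
  Ideal.span (Set.range fun i => (X i : MvPolynomial (Fin n) K) ^ p ^ e)

/-- `ν_f(p^e) = max { N | f^N ∉ m^{[p^e]} }`. -/
noncomputable def nu (p : ℕ) {n : ℕ} {K : Type*} [Field K]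
    (f : MvPolynomial (Fin n) K) (e : ℕ) : ℕ :=
  sSup {N : ℕ | f ^ N ∉ frobPow p n K e}

/-- The F-pure threshold `fpt(f) = lim_e ν_f(p^e)/p^e`; since the sequence is
non-decreasing and bounded, the limit equals the supremum. -/
noncomputable def fpt (p : ℕ) {n : ℕ} {K : Type*} [Field K]
    (f : MvPolynomial (Fin n) K) : ℝ :=
  ⨆ e : ℕ, (nu p f e : ℝ) / (p : ℝ) ^ e

/-- The maximal ideal `m = (x_1, …, x_n)`. -/
noncomputable def mIdeal (n : ℕ) (K : Type*) [Field K] : Ideal (MvPolynomial (Fin n) K) :=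
  Ideal.span (Set.range (X : Fin n → MvPolynomial (Fin n) K))

/-!
Write `Δ_e = ⌈β p^e⌉ - ⌈α p^e⌉`. Multiplying by `p` can lower this gap by at most `p - 1`, so
`Δ_{e+1} ≥ p (Δ_e - 1) + 1`. Because `b β p^e` is an integer, the fractional excess of `β p^e`
over `⌈β p^e⌉ - 1` is at least `1/b`; multiplying by `p^s > b` makes it exceed `1`, which gives the
stronger jump `Δ_{e+s} ≥ p^s (Δ_e - 1) + 2`. Starting from `Δ_ℓ ≥ 1` this yields `Δ_{ℓ+s} ≥ 2`,
and the one-step bound then gives `Δ_{ℓ+s+k} ≥ p^k + 1` by induction on `k`.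
-/

theorem lt_pow_orderOf_natCast {p b : ℕ} [NeZero b] (hp : 1 < p) (hcop : p.Coprime b) :
    b < p ^ orderOf (p : ZMod b) := by
  have hs : 0 < orderOf (p : ZMod b) := by
    rw [← ZMod.coe_unitOfCoprime p hcop, orderOf_units]
    exact orderOf_pos _
  have hone : ((p ^ orderOf (p : ZMod b) : ℕ) : ZMod b) = ((1 : ℕ) : ZMod b) := by
    push_cast
    exact pow_orderOf_eq_one _
  have hdvd : b ∣ p ^ orderOf (p : ZMod b) - 1 :=
    (Nat.modEq_iff_dvd' (Nat.one_le_pow _ _ (by omega))).mp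
      ((ZMod.natCast_eq_natCast_iff _ _ _).mp hone).symm
  have hgt : 1 < p ^ orderOf (p : ZMod b) := Nat.one_lt_pow hs.ne' hp
  have := Nat.le_of_dvd (by omega) hdvd
  omega

section Ceil

variable {R : Type*} [CommRing R] [LinearOrder R] [IsStrictOrderedRing R] [FloorRing R]

theorem Int.ceil_natCast_mul_le (q : ℕ) (x : R) : ⌈(q : R) * x⌉ ≤ q * ⌈x⌉ := by
  rw [Int.ceil_le]
  push_cast
  exact mul_le_mul_of_nonneg_left (Int.le_ceil x) q.cast_nonneg

theorem Int.natCast_mul_ceil_sub_one_add_one_le {q : ℕ} (hq : 0 < q) (x : R) :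
    q * (⌈x⌉ - 1) + 1 ≤ ⌈(q : R) * x⌉ := by
  rw [Int.add_one_le_iff, Int.lt_ceil]
  push_cast
  have : (⌈x⌉ : R) - 1 < x := by linarith [Int.ceil_lt_add_one x]
  exact mul_lt_mul_of_pos_left this (by exact_mod_cast hq)

/-- If `b x ∈ ℤ` then `x - (⌈x⌉ - 1) ≥ 1/b`, so for `q > b` the same bound gains one more unit. -/
theorem Int.natCast_mul_ceil_sub_one_add_two_le {q b : ℕ} (hb : 0 < b) (hbq : b < q) {x : R}
    {n : ℤ} (hx : (b : R) * x = n) :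
    q * (⌈x⌉ - 1) + 2 ≤ ⌈(q : R) * x⌉ := by
  have hbR : (0 : R) < b := by exact_mod_cast hb
  have hexcess_int : (n - b * (⌈x⌉ - 1) : ℤ) = (b : R) * (x - (⌈x⌉ - 1)) := by
    push_cast
    rw [← hx]
    ring
  have hexcess_pos : (0 : R) < x - (⌈x⌉ - 1) := by linarith [Int.ceil_lt_add_one x]
  have hexcess : (1 : R) ≤ b * (x - (⌈x⌉ - 1)) := by
    rw [← hexcess_int]
    have : (0 : ℤ) < n - b * (⌈x⌉ - 1) := by
      exact_mod_cast hexcess_int ▸ mul_pos hbR hexcess_pos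
    exact_mod_cast this
  have hbq' : (b : R) + 1 ≤ q := by exact_mod_cast hbq
  suffices (q : R) * (⌈x⌉ - 1) + 1 < q * x by
    have : q * (⌈x⌉ - 1) + 1 < ⌈(q : R) * x⌉ := Int.lt_ceil.mpr (by push_cast; exact this)
    omega
  nlinarith

end Ceil

/-- `p^e ⟨γ⟩_e` is the integer `⌈γ p^e⌉ - 1`, so `Δ_e` is the gap between the two ceilings. -/
noncomputable def ceilGap (p : ℕ) (α β : ℝ) (e : ℕ) : ℤ := ⌈β * (p : ℝ) ^ e⌉ - ⌈α * (p : ℝ) ^ e⌉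

namespace ceilGap

variable {p : ℕ} {α β : ℝ}

theorem eq_pow_mul_trunc_sub (hp : p ≠ 0) (hα : 0 < α) (hβ : 0 < β) (e : ℕ) :
    (ceilGap p α β e : ℝ) = (p : ℝ) ^ e * trunc p e β - (p : ℝ) ^ e * trunc p e α := by
  have hpe : (p : ℝ) ^ e ≠ 0 := pow_ne_zero _ (by exact_mod_cast hp)
  simp only [ceilGap, trunc, if_neg hα.not_ge, if_neg hβ.not_ge, mul_div_cancel₀ _ hpe]
  push_cast
  ring

theorem exists_one_le (hp : 1 < p) (hαβ : α < β) : ∃ e, 1 ≤ ceilGap p α β e := by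
  obtain ⟨e, he⟩ := pow_unbounded_of_one_lt (1 / (β - α)) (by exact_mod_cast hp : (1 : ℝ) < p)
  refine ⟨e, ?_⟩
  have hspread : α * (p : ℝ) ^ e + 1 ≤ β * (p : ℝ) ^ e := by
    rw [div_lt_iff₀ (by linarith)] at he
    linarith
  have := Int.ceil_mono hspread
  rw [Int.ceil_add_one] at this
  unfold ceilGap
  omega

theorem mul_sub_one_add_one_le_succ (hp : 0 < p) (e : ℕ) :
    p * (ceilGap p α β e - 1) + 1 ≤ ceilGap p α β (e + 1) := by
  have hβ := Int.natCast_mul_ceil_sub_one_add_one_le hp (β * (p : ℝ) ^ e)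
  have hα := Int.ceil_natCast_mul_le p (α * (p : ℝ) ^ e)
  simp only [ceilGap, pow_succ, mul_comm _ (p : ℝ), mul_left_comm _ (p : ℝ)] at *
  linarith

theorem pow_mul_sub_one_add_two_le_add {a b s : ℕ} (hb : 0 < b) (hβ : β = a / b)
    (hbs : b < p ^ s) (e : ℕ) :
    p ^ s * (ceilGap p α β e - 1) + 2 ≤ ceilGap p α β (e + s) := by
  have hden : (b : ℝ) * (β * (p : ℝ) ^ e) = ((a * p ^ e : ℕ) : ℤ) := by
    rw [hβ]
    push_cast
    field_simp
  have hβ' := Int.natCast_mul_ceil_sub_one_add_two_le hb hbs hden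
  have hα := Int.ceil_natCast_mul_le (p ^ s) (α * (p : ℝ) ^ e)
  simp only [ceilGap, pow_add, Nat.cast_pow, mul_comm _ ((p : ℝ) ^ s),
    mul_left_comm _ ((p : ℝ) ^ s)] at *
  push_cast at *
  linarith

theorem pow_add_one_le_add (hp : 0 < p) {e : ℕ} (h2 : 2 ≤ ceilGap p α β e) (k : ℕ) :
    p ^ k + 1 ≤ ceilGap p α β (e + k) := by
  induction k with
  | zero => simpa using h2
  | succ k ih =>
    have := mul_sub_one_add_one_le_succ (α := α) (β := β) hp (e + k)
    rw [pow_succ, ← add_assoc]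
    nlinarith

end ceilGap

theorem stmt_6_general (p : ℕ) (hp : p.Prime) (α β : ℝ) (a b : ℕ) (hb : 0 < b)
    (hcop : Nat.Coprime p b) (hβ : β = (a : ℝ) / b)
    (h0 : 0 < α) (hab : α < β)
    (Δ : ℕ → ℝ) (hΔ : ∀ e, Δ e = (p : ℝ) ^ e * trunc p e β - (p : ℝ) ^ e * trunc p e α)
    (ℓ : ℕ) (hℓ : ℓ = sInf {e : ℕ | 1 ≤ Δ e})
    (s : ℕ) (hs : s = orderOf (p : ZMod b)) :
    ∀ k : ℕ, (p : ℝ) ^ k + 1 ≤ Δ (ℓ + s + k) := by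
  have : NeZero b := NeZero.of_pos hb
  have hΔgap : ∀ e, Δ e = ceilGap p α β e := fun e =>
    (hΔ e).trans (ceilGap.eq_pow_mul_trunc_sub hp.ne_zero h0 (h0.trans hab) e).symm
  have hset : {e : ℕ | 1 ≤ Δ e} = {e | 1 ≤ ceilGap p α β e} := by
    ext e
    change 1 ≤ Δ e ↔ _
    rw [hΔgap]
    exact_mod_cast Iff.rfl
  have hℓgap : 1 ≤ ceilGap p α β ℓ := by
    rw [hℓ, hset]
    exact Nat.sInf_mem (ceilGap.exists_one_le hp.one_lt hab)
  have hbs : b < p ^ s := hs ▸ lt_pow_orderOf_natCast hp.one_lt hcop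
  have hjump := ceilGap.pow_mul_sub_one_add_two_le_add (α := α) hb hβ hbs ℓ
  have hpow_pos : (0 : ℤ) < p ^ s := pow_pos (by exact_mod_cast hp.pos) s
  have h2 : 2 ≤ ceilGap p α β (ℓ + s) := by nlinarith
  intro k
  rw [hΔgap]
  exact_mod_cast ceilGap.pow_add_one_le_add hp.pos h2 k

/-- with `β = a/b`, `p ∤ b`, `ℓ = min{e : Δ_e ≥ 1}` and `s` the order of
`p` mod `b`, one has `Δ_{ℓ+s+k} ≥ p^k + 1` for all `k ≥ 0`. -/
theorem stmt_6 (p : ℕ) (hp : p.Prime) (α β : ℝ) (a b : ℕ) (ha : 0 < a) (hb : 0 < b)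
    (hcop : Nat.Coprime p b) (hβ : β = (a : ℝ) / b)
    (h0 : 0 < α) (hab : α < β) (hb1 : β ≤ 1)
    (Δ : ℕ → ℝ) (hΔ : ∀ e, Δ e = (p : ℝ) ^ e * trunc p e β - (p : ℝ) ^ e * trunc p e α)
    (ℓ : ℕ) (hℓ : ℓ = sInf {e : ℕ | 1 ≤ Δ e})
    (s : ℕ) (hs : s = orderOf (p : ZMod b)) :
    ∀ k : ℕ, (p : ℝ) ^ k + 1 ≤ Δ (ℓ + s + k) :=
  stmt_6_general p hp α β a b hb hcop hβ h0 hab Δ hΔ ℓ hℓ s hs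
end

section
/- Let p be a prime, L a field of characteristic p, and f ∈ L[x_1,…,x_n] a nonzero polynomial homogeneous of degree d under an ℕ-grading with deg(x_i) = w_i > 0. For e ≥ 1, let ν_f(p^e) := max{N : f^N ∉ (x_1^{p^e},…,x_n^{p^e})}. Then ν_f(p^e) ≤ ⌊(p^e − 1)·(Σ w_i)/d⌋. -/
open MvPolynomial

/-- `ν_f(p^e) ≤ ⌊(p^e − 1)(Σ w_i)/d⌋` for a nonzero weighted-homogeneous
`f ∈ m` of degree `d`. -/
theorem stmt_8 (p : ℕ) (hp : p.Prime) (n : ℕ) (K : Type*) [Field K] [CharP K p]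
    (w : Fin n → ℕ) (hw : ∀ i, 0 < w i) (d : ℕ)
    (f : MvPolynomial (Fin n) K) (hf0 : f ≠ 0)
    (hfh : f.IsWeightedHomogeneous w d)
    (hfm : f ∈ mIdeal n K)
    (e : ℕ) (he : 1 ≤ e) :
    (nu p f e : ℤ) ≤ ⌊((p : ℚ) ^ e - 1) * (∑ i, (w i : ℚ)) / d⌋ := by
  classical
  -- d is positive
  have hd : 0 < d := by
    rcases Nat.eq_zero_or_pos d with hd0 | hd0
    · exfalso
      subst hd0
      obtain ⟨μ, hμ⟩ := (support_nonempty.mpr hf0)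
      have hμ0 : μ = 0 := by
        have := hfh (mem_support_iff.mp hμ)
        ext i
        have hsum : (Finsupp.weight w) μ = Finsupp.sum μ (fun i c => c • w i) := rfl
        rw [hsum] at this
        by_contra hne
        have hi : i ∈ μ.support := Finsupp.mem_support_iff.mpr hne
        have hpos : 0 < μ i • w i := Nat.mul_pos (Nat.pos_of_ne_zero hne) (hw i)
        have : 0 < Finsupp.sum μ (fun i c => c • w i) := by
          rw [Finsupp.sum]
          exact lt_of_lt_of_le hpos
            (Finset.single_le_sum (f := fun j => μ j • w j) (fun j _ => Nat.zero_le _) hi)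
        omega
      have hmem := hfm
      rw [mIdeal, ← Set.image_univ, mem_ideal_span_X_image] at hmem
      obtain ⟨i, -, hi⟩ := hmem μ hμ
      exact hi (by simp [hμ0])
    · exact hd0
  set B : ℤ := ⌊((p : ℚ) ^ e - 1) * (∑ i, (w i : ℚ)) / d⌋ with hB
  have hpe : 1 ≤ p ^ e := Nat.one_le_pow _ _ hp.pos
  have hBnn : 0 ≤ B := by
    apply Int.floor_nonneg.mpr
    apply div_nonneg
    · apply mul_nonneg
      · have : (1 : ℚ) ≤ (p : ℚ) ^ e := by
          exact_mod_cast Nat.one_le_pow _ _ hp.pos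
        linarith
      · exact Finset.sum_nonneg fun i _ => by positivity
    · positivity
  -- key bound: any N in the set is ≤ B.toNat
  have key : ∀ N ∈ {N : ℕ | f ^ N ∉ frobPow p n K e}, N ≤ B.toNat := by
    intro N hN
    simp only [Set.mem_setOf_eq] at hN
    -- f^N is weighted homogeneous of degree N*d
    have hpow : (f ^ N).IsWeightedHomogeneous w (N * d) := by
      have := IsWeightedHomogeneous.prod (Finset.range N) (fun _ => f) (fun _ => d)
        (fun i _ => hfh)
      simpa [Finset.prod_const, Finset.sum_const, Nat.smul_one_eq_cast] using this
    -- find a monomial with all exponents < p^e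
    have hfrob : frobPow p n K e =
        Ideal.span ((fun s => monomial s (1 : K)) ''
          (Set.range fun i : Fin n => Finsupp.single i (p ^ e))) := by
      rw [frobPow, ← Set.range_comp]
      congr 1
      ext g
      simp [Function.comp, X_pow_eq_monomial]
    rw [hfrob, mem_ideal_span_monomial_image] at hN
    push_neg at hN
    obtain ⟨μ, hμs, hμ⟩ := hN
    have hμlt : ∀ i, μ i ≤ p ^ e - 1 := by
      intro i
      have := hμ (Finsupp.single i (p ^ e)) ⟨i, rfl⟩
      have h2 : ¬ (p ^ e ≤ μ i) := by
        intro hle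
        exact this fun j => by
          rcases eq_or_ne j i with rfl | hne
          · simpa using hle
          · simp [Finsupp.single_apply, hne.symm]
      omega
    -- weighted degree
    have hdeg : (Finsupp.weight w) μ = N * d := hpow (mem_support_iff.mp hμs)
    have hdeg' : (Finsupp.weight w) μ = ∑ i : Fin n, μ i * w i := by
      rw [Finsupp.weight_apply, Finsupp.sum_fintype]
      · simp [smul_eq_mul]
      · intro i; simp
    have hbound : N * d ≤ (p ^ e - 1) * ∑ i, w i := by
      rw [← hdeg, hdeg', Finset.mul_sum]
      exact Finset.sum_le_sum fun i _ => Nat.mul_le_mul_right _ (hμlt i)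
    -- convert to ℚ
    have hq : (N : ℚ) ≤ ((p : ℚ) ^ e - 1) * (∑ i, (w i : ℚ)) / d := by
      rw [le_div_iff₀ (by exact_mod_cast hd : (0 : ℚ) < (d : ℚ))]
      have : ((N * d : ℕ) : ℚ) ≤ (((p ^ e - 1) * ∑ i, w i : ℕ) : ℚ) := by
        exact_mod_cast hbound
      push_cast [Nat.cast_sub hpe] at this
      push_cast
      linarith
    have : (N : ℤ) ≤ B := Int.le_floor.mpr (by exact_mod_cast hq)
    omega
  have : nu p f e ≤ B.toNat := csSup_le' key
  omega
end

section
/- Let p be a prime, L a field of characteristic p, and f a nonzero polynomial in the maximal ideal m = (x_1,…,x_n) of L[x_1,…,x_n] which is homogeneous of degree d under an ℕ-grading with deg x_i = w_i > 0. Then the F-pure threshold of f satisfies fpt(f) ≤ min{(Σ w_i)/d, 1}. -/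
open MvPolynomial

/-!
Since `f ∈ m`, `f^{p^e} ∈ m^{[p^e]}`, so `ν_f(p^e) < p^e`. A polynomial outside `m^{[p^e]}` has
a monomial `x^a` with every `a_i ≤ p^e - 1`; applied to `f^N`, weighted homogeneous of degree
`N d`, this gives `N d = Σ a_i w_i ≤ (p^e - 1) Σ w_i`. Dividing by `d p^e` bounds every
`ν_f(p^e)/p^e`, hence their supremum `fpt(f)`, by both `(Σ w_i)/d` and `1`.
-/

section FrobeniusPowers

variable {p n : ℕ} {K : Type*} [Field K]

lemma constantCoeff_eq_zero_of_mem_mIdeal {f : MvPolynomial (Fin n) K} (hf : f ∈ mIdeal n K) :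
    constantCoeff f = 0 := by
  have hle : mIdeal n K ≤ RingHom.ker (constantCoeff : MvPolynomial (Fin n) K →+* K) := by
    rw [mIdeal, Ideal.span_le]
    rintro _ ⟨i, rfl⟩
    simp
  exact hle hf

lemma frobPow_le_mIdeal (hp : p ≠ 0) (e : ℕ) : frobPow p n K e ≤ mIdeal n K := by
  rw [frobPow, Ideal.span_le]
  rintro _ ⟨i, rfl⟩
  exact Ideal.pow_mem_of_mem _ (Ideal.subset_span (Set.mem_range_self i)) _
    (pow_pos (Nat.pos_of_ne_zero hp) e)

lemma one_notMem_frobPow (hp : p ≠ 0) (e : ℕ) : (1 : MvPolynomial (Fin n) K) ∉ frobPow p n K e :=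
  fun h => by simpa using constantCoeff_eq_zero_of_mem_mIdeal (frobPow_le_mIdeal hp e h)

lemma frobPow_eq_map_iterateFrobenius [Fact p.Prime] [CharP K p] (e : ℕ) :
    frobPow p n K e = (mIdeal n K).map (iterateFrobenius (MvPolynomial (Fin n) K) p e) := by
  rw [mIdeal, Ideal.map_span, ← Set.range_comp]
  rfl

lemma pow_mem_frobPow (hp : p.Prime) [CharP K p] (e : ℕ) {f : MvPolynomial (Fin n) K}
    (hf : f ∈ mIdeal n K) : f ^ p ^ e ∈ frobPow p n K e := by
  have : Fact p.Prime := ⟨hp⟩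
  rw [frobPow_eq_map_iterateFrobenius]
  exact Ideal.mem_map_of_mem _ hf

lemma mem_frobPow_of_forall_mem_support {e : ℕ} {g : MvPolynomial (Fin n) K}
    (h : ∀ a ∈ g.support, ∃ i, p ^ e ≤ a i) : g ∈ frobPow p n K e := by
  rw [← support_sum_monomial_coeff g]
  refine Ideal.sum_mem _ fun a ha => ?_
  obtain ⟨i, hi⟩ := h a ha
  have hsplit : monomial a (coeff a g) =
      monomial (a - Finsupp.single i (p ^ e)) (coeff a g) * X i ^ p ^ e := by
    rw [X_pow_eq_monomial, monomial_mul, mul_one,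
      tsub_add_cancel_of_le (Finsupp.single_le_iff.mpr hi)]
  rw [hsplit]
  exact Ideal.mul_mem_left _ _ (Ideal.subset_span ⟨i, rfl⟩)

end FrobeniusPowers

section Threshold

variable {p n : ℕ} {K : Type*} [Field K] [CharP K p] {f : MvPolynomial (Fin n) K}

lemma lt_pow_of_pow_notMem_frobPow (hp : p.Prime) (hf : f ∈ mIdeal n K) {e N : ℕ}
    (hN : f ^ N ∉ frobPow p n K e) : N < p ^ e := by
  by_contra! hle
  refine hN ?_
  rw [← Nat.add_sub_cancel' hle, pow_add]
  exact Ideal.mul_mem_right _ _ (pow_mem_frobPow hp e hf)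

lemma pow_nu_notMem_frobPow (hp : p.Prime) (hf : f ∈ mIdeal n K) (e : ℕ) :
    f ^ nu p f e ∉ frobPow p n K e := by
  have hne : {N : ℕ | f ^ N ∉ frobPow p n K e}.Nonempty :=
    ⟨0, by simpa using one_notMem_frobPow hp.ne_zero e⟩
  exact Nat.sSup_mem hne ⟨p ^ e, fun N hN => (lt_pow_of_pow_notMem_frobPow hp hf hN).le⟩

lemma nu_lt_pow (hp : p.Prime) (hf : f ∈ mIdeal n K) (e : ℕ) : nu p f e < p ^ e :=
  lt_pow_of_pow_notMem_frobPow hp hf (pow_nu_notMem_frobPow hp hf e)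

end Threshold

lemma le_mul_sum_of_notMem_frobPow {p n : ℕ} {K : Type*} [Field K] {w : Fin n → ℕ} {D e : ℕ}
    {g : MvPolynomial (Fin n) K} (hg : g.IsWeightedHomogeneous w D)
    (hg' : g ∉ frobPow p n K e) : D ≤ (p ^ e - 1) * ∑ i, w i := by
  obtain ⟨a, ha, ha_lt⟩ : ∃ a ∈ g.support, ∀ i, a i < p ^ e := by
    by_contra! h
    exact hg' (mem_frobPow_of_forall_mem_support h)
  calc D = ∑ i, a i * w i := by rw [← hg (mem_support_iff.mp ha), Finsupp.weight_eq_sum]; rfl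
    _ ≤ ∑ i, (p ^ e - 1) * w i := by
      gcongr with i
      exact Nat.le_sub_one_of_lt (ha_lt i)
    _ = (p ^ e - 1) * ∑ i, w i := (Finset.mul_sum ..).symm

lemma pos_of_isWeightedHomogeneous_of_mem_mIdeal {n : ℕ} {K : Type*} [Field K]
    {w : Fin n → ℕ} (hw : ∀ i, 0 < w i) {d : ℕ} {f : MvPolynomial (Fin n) K} (hf0 : f ≠ 0)
    (hfh : f.IsWeightedHomogeneous w d) (hfm : f ∈ mIdeal n K) : 0 < d := by
  obtain ⟨a, ha⟩ := support_nonempty.mpr hf0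
  have ha0 : a ≠ 0 := by
    rintro rfl
    exact mem_support_iff.mp ha (constantCoeff_eq_zero_of_mem_mIdeal hfm)
  obtain ⟨i, hi⟩ := Finsupp.ne_iff.mp ha0
  rw [← hfh (mem_support_iff.mp ha)]
  exact (hw i).trans_le (Finsupp.le_weight_of_ne_zero' w hi)

/-- `fpt(f) ≤ min{(Σ w_i)/d, 1}` for a nonzero weighted-homogeneous
`f ∈ m` of degree `d`. -/
theorem stmt_9 (p : ℕ) (hp : p.Prime) (n : ℕ) (K : Type*) [Field K] [CharP K p]
    (w : Fin n → ℕ) (hw : ∀ i, 0 < w i) (d : ℕ)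
    (f : MvPolynomial (Fin n) K) (hf0 : f ≠ 0)
    (hfh : f.IsWeightedHomogeneous w d)
    (hfm : f ∈ mIdeal n K) :
    fpt p f ≤ min ((∑ i, (w i : ℝ)) / d) 1 := by
  have hd : (0 : ℝ) < d := mod_cast pos_of_isWeightedHomogeneous_of_mem_mIdeal hw hf0 hfh hfm
  refine ciSup_le fun e => ?_
  have hpe : (0 : ℝ) < (p : ℝ) ^ e := pow_pos (Nat.cast_pos.mpr hp.pos) e
  refine le_min ?_ ?_
  · rw [div_le_div_iff₀ hpe hd]
    have hdeg : nu p f e * d ≤ (∑ i, w i) * p ^ e :=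
      calc nu p f e * d ≤ (p ^ e - 1) * ∑ i, w i :=
            le_mul_sum_of_notMem_frobPow (hfh.pow _) (pow_nu_notMem_frobPow hp hfm e)
        _ ≤ (∑ i, w i) * p ^ e := by rw [mul_comm]; gcongr; exact Nat.sub_le _ _
    exact_mod_cast hdeg
  · rw [div_le_one hpe]
    exact_mod_cast (nu_lt_pow hp hfm e).le
end

section
/- Let p be a prime, L a field of characteristic p, and fix an ℕ-grading on R = L[x_1,…,x_n]. Let f ∈ m = (x_1,…,x_n) be homogeneous of degree d, and let g ∈ R be a (possibly zero) polynomial all of whose monomials have degree at least d+1. Then for every e ≥ 1, ν_f(p^e) ≤ ν_{f+g}(p^e); consequently fpt(f) ≤ fpt(f+g). -/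
open MvPolynomial

section Aux
variable {n : ℕ} {K : Type*} [Field K]

lemma weight_eq_sum (w : Fin n → ℕ) (u : Fin n →₀ ℕ) :
    Finsupp.weight w u = ∑ i, u i * w i := by
  rw [Finsupp.weight_apply, Finsupp.sum_fintype]
  · simp [smul_eq_mul]
  · intro i; simp

lemma sum_weight_add (w : Fin n → ℕ) (u v : Fin n →₀ ℕ) :
    ∑ i, (u + v) i * w i = (∑ i, u i * w i) + ∑ i, v i * w i := by
  rw [← Finset.sum_add_distrib]
  refine Finset.sum_congr rfl fun i _ => ?_
  simp [add_mul]

lemma mul_support_weight {a b : MvPolynomial (Fin n) K} {w : Fin n → ℕ} {A B : ℕ}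
    (ha : ∀ u ∈ a.support, A ≤ ∑ i, u i * w i)
    (hb : ∀ u ∈ b.support, B ≤ ∑ i, u i * w i) :
    ∀ u ∈ (a * b).support, A + B ≤ ∑ i, u i * w i := by
  classical
  intro u hu
  obtain ⟨v, hv, t, ht, rfl⟩ := Finset.mem_add.mp (MvPolynomial.support_mul a b hu)
  rw [sum_weight_add]
  exact add_le_add (ha v hv) (hb t ht)

lemma add_support_weight {a b : MvPolynomial (Fin n) K} {w : Fin n → ℕ} {A : ℕ}
    (ha : ∀ u ∈ a.support, A ≤ ∑ i, u i * w i)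
    (hb : ∀ u ∈ b.support, A ≤ ∑ i, u i * w i) :
    ∀ u ∈ (a + b).support, A ≤ ∑ i, u i * w i := by
  intro u hu
  rcases Finset.mem_union.mp (MvPolynomial.support_add hu) with h | h
  · exact ha u h
  · exact hb u h

lemma pow_support_weight {a : MvPolynomial (Fin n) K} {w : Fin n → ℕ} {A : ℕ}
    (ha : ∀ u ∈ a.support, A ≤ ∑ i, u i * w i) (N : ℕ) :
    ∀ u ∈ (a ^ N).support, N * A ≤ ∑ i, u i * w i := by
  induction N with
  | zero => intro u hu; simp
  | succ N ih =>
      have := mul_support_weight ih ha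
      rw [← pow_succ] at this
      intro u hu
      have h2 := this u hu
      rw [Nat.succ_mul]
      omega

lemma mem_frobPow_iff {p n : ℕ} {K : Type*} [Field K] {e : ℕ}
    (h : MvPolynomial (Fin n) K) :
    h ∈ frobPow p n K e ↔ ∀ u ∈ h.support, ∃ i, p ^ e ≤ u i := by
  classical
  constructor
  · intro hmem u hu
    rw [frobPow, Ideal.mem_span_range_iff_exists_fun] at hmem
    obtain ⟨c, hc⟩ := hmem
    rw [← hc] at hu
    obtain ⟨i, -, hi⟩ := Finset.mem_biUnion.mp (MvPolynomial.support_sum hu)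
    obtain ⟨v, hv, t, ht, rfl⟩ := Finset.mem_add.mp (MvPolynomial.support_mul _ _ hi)
    rw [MvPolynomial.support_X_pow] at ht
    refine ⟨i, ?_⟩
    have : t = Finsupp.single i (p ^ e) := Finset.mem_singleton.mp ht
    subst this
    simp
  · intro hu
    rw [h.as_sum]
    refine Ideal.sum_mem _ fun u hus => ?_
    obtain ⟨i, hi⟩ := hu u hus
    have hle : Finsupp.single i (p ^ e) ≤ u := by
      intro j
      rcases eq_or_ne j i with rfl | hne
      · simpa using hi
      · simp [Finsupp.single_apply, hne.symm]
    have : (monomial u) (coeff u h) =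
        (monomial (u - Finsupp.single i (p ^ e))) (coeff u h) * X i ^ p ^ e := by
      rw [MvPolynomial.X_pow_eq_monomial, MvPolynomial.monomial_mul,
        tsub_add_cancel_of_le hle, mul_one]
    rw [this]
    exact Ideal.mul_mem_left _ _ (Ideal.subset_span ⟨i, rfl⟩)

end Aux

/-- if every monomial of `g` has degree `≥ d + 1`, then
`ν_f(p^e) ≤ ν_{f+g}(p^e)` for all `e ≥ 1`, and hence `fpt(f) ≤ fpt(f+g)`. -/
theorem stmt_11 (p : ℕ) (hp : p.Prime) (n : ℕ) (K : Type*) [Field K] [CharP K p]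
    (w : Fin n → ℕ) (hw : ∀ i, 0 < w i) (d : ℕ)
    (f : MvPolynomial (Fin n) K) (hf0 : f ≠ 0)
    (hfh : f.IsWeightedHomogeneous w d) (hfm : f ∈ mIdeal n K)
    (g : MvPolynomial (Fin n) K)
    (hg : ∀ u ∈ g.support, d + 1 ≤ ∑ i, u i * w i) :
    (∀ e, 1 ≤ e → nu p f e ≤ nu p (f + g) e) ∧ fpt p f ≤ fpt p (f + g) := by
  classical
  -- constant coefficient of f is zero
  have hc0 : coeff 0 f = 0 := by
    have hker : Ideal.span (Set.range (X : Fin n → MvPolynomial (Fin n) K)) ≤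
        RingHom.ker (constantCoeff (σ := Fin n) (R := K)) := by
      rw [Ideal.span_le]
      rintro _ ⟨i, rfl⟩
      simp [RingHom.mem_ker]
    simpa [RingHom.mem_ker, constantCoeff_eq] using hker hfm
  -- monomials of f have weight exactly d
  have hfw : ∀ u ∈ f.support, ∑ i, u i * w i = d := by
    intro u hu
    rw [← weight_eq_sum]
    exact hfh (MvPolynomial.mem_support_iff.mp hu)
  -- d ≥ 1
  have hd1 : 1 ≤ d := by
    obtain ⟨u, hu⟩ := (MvPolynomial.support_nonempty (p := f)).mpr hf0
    by_contra hd
    have hd0 : d = 0 := by omega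
    have h1 := hfw u hu
    have hu0 : u = 0 := by
      ext i
      have : u i * w i = 0 := by
        have := Finset.sum_eq_zero_iff.mp (h1.trans hd0) i (Finset.mem_univ i)
        exact this
      rcases Nat.mul_eq_zero.mp this with h | h
      · simpa using h
      · exact absurd h (by have := hw i; omega)
    rw [hu0] at hu
    exact MvPolynomial.mem_support_iff.mp hu hc0
  -- key decomposition: (f+g)^N = f^N + (terms of weight > N*d)
  have key : ∀ N : ℕ, ∃ r : MvPolynomial (Fin n) K,
      (f + g) ^ N = f ^ N + r ∧ ∀ u ∈ r.support, N * d + 1 ≤ ∑ i, u i * w i := by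
    intro N
    induction N with
    | zero => exact ⟨0, by simp, by simp⟩
    | succ N ih =>
        obtain ⟨r, hr, hrw⟩ := ih
        refine ⟨f ^ N * g + r * f + r * g, ?_, ?_⟩
        · rw [pow_succ, hr]; ring
        · have hfd : ∀ u ∈ f.support, d ≤ ∑ i, u i * w i :=
            fun u hu => (hfw u hu).ge
          have hfN := pow_support_weight hfd N
          have h1 := mul_support_weight hfN hg
          have h2 := mul_support_weight hrw hfd
          have h3 := mul_support_weight hrw hg
          refine add_support_weight (add_support_weight
            (fun u hu => ?_) (fun u hu => ?_)) (fun u hu => ?_)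
          · have := h1 u hu; rw [Nat.succ_mul]; omega
          · have := h2 u hu; rw [Nat.succ_mul]; omega
          · have := h3 u hu; rw [Nat.succ_mul]; omega
  have hpowh : ∀ N : ℕ, (f ^ N).IsWeightedHomogeneous w (N * d) := by
    intro N
    induction N with
    | zero => simpa using MvPolynomial.isWeightedHomogeneous_one K w
    | succ N ih =>
        rw [pow_succ, Nat.succ_mul]
        exact ih.mul hfh
  -- transfer: (f+g)^N ∈ frobPow → f^N ∈ frobPow
  have transfer : ∀ e N : ℕ, (f + g) ^ N ∈ frobPow p n K e → f ^ N ∈ frobPow p n K e := by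
    intro e N hmem
    obtain ⟨r, hr, hrw⟩ := key N
    rw [mem_frobPow_iff] at hmem ⊢
    intro u hu
    have hcr : coeff u r = 0 := by
      by_contra hne
      have h1 := hrw u (MvPolynomial.mem_support_iff.mpr hne)
      have hwu : Finsupp.weight w u = N * d :=
        (hpowh N) (MvPolynomial.mem_support_iff.mp hu)
      rw [weight_eq_sum] at hwu
      omega
    apply hmem
    rw [MvPolynomial.mem_support_iff, hr, coeff_add, hcr, add_zero]
    exact MvPolynomial.mem_support_iff.mp hu
  -- boundedness of nu (f+g)
  set Tw := ∑ i, w i with hTw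
  have hfg1 : ∀ u ∈ (f + g).support, 1 ≤ ∑ i, u i * w i :=
    add_support_weight (fun u hu => le_trans hd1 (hfw u hu).ge)
      (fun u hu => le_trans (by omega) (hg u hu))
  have bound : ∀ e N : ℕ, (p ^ e - 1) * Tw < N → (f + g) ^ N ∈ frobPow p n K e := by
    intro e N hN
    rw [mem_frobPow_iff]
    intro u hu
    have hWu : N ≤ ∑ i, u i * w i := by
      have := pow_support_weight hfg1 N u hu; omega
    by_contra hcon
    push_neg at hcon
    have hle : ∑ i, u i * w i ≤ (p ^ e - 1) * Tw := by
      rw [hTw, Finset.mul_sum]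
      refine Finset.sum_le_sum fun i _ => Nat.mul_le_mul_right _ ?_
      have := hcon i; omega
    omega
  have bddT : ∀ e, BddAbove {N : ℕ | (f + g) ^ N ∉ frobPow p n K e} := fun e =>
    ⟨(p ^ e - 1) * Tw, fun N hN => by
      by_contra h
      exact hN (bound e N (by omega))⟩
  have nubound : ∀ e, nu p (f + g) e ≤ (p ^ e - 1) * Tw := by
    intro e
    rcases Set.eq_empty_or_nonempty {N : ℕ | (f + g) ^ N ∉ frobPow p n K e} with hS | hS
    · show sSup {N : ℕ | (f + g) ^ N ∉ frobPow p n K e} ≤ _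
      rw [hS, csSup_empty]
      exact bot_le
    · refine csSup_le hS fun N hN => ?_
      by_contra hlt
      exact hN (bound e N (by omega))
  have numono : ∀ e, nu p f e ≤ nu p (f + g) e := by
    intro e
    rcases Set.eq_empty_or_nonempty {N : ℕ | f ^ N ∉ frobPow p n K e} with hS | hS
    · show sSup {N : ℕ | f ^ N ∉ frobPow p n K e} ≤ _
      rw [hS, csSup_empty]
      exact bot_le
    · exact csSup_le_csSup (bddT e) hS fun N hN hmem => hN (transfer e N hmem)
  refine ⟨fun e _ => numono e, ?_⟩
  -- fpt inequality
  have hp1 : (1 : ℝ) < (p : ℝ) := by exact_mod_cast hp.one_lt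
  have hppos : ∀ e : ℕ, (0 : ℝ) < (p : ℝ) ^ e := fun e => pow_pos (by linarith) e
  have hub : ∀ e : ℕ, (nu p (f + g) e : ℝ) / (p : ℝ) ^ e ≤ (Tw : ℝ) := by
    intro e
    rw [div_le_iff₀ (hppos e)]
    have h1 : nu p (f + g) e ≤ p ^ e * Tw :=
      le_trans (nubound e) (Nat.mul_le_mul_right _ (by omega))
    calc (nu p (f + g) e : ℝ) ≤ ((p ^ e * Tw : ℕ) : ℝ) := by exact_mod_cast h1
      _ = (Tw : ℝ) * (p : ℝ) ^ e := by push_cast; ring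
  have hbdd : BddAbove (Set.range fun e : ℕ => (nu p (f + g) e : ℝ) / (p : ℝ) ^ e) := by
    refine ⟨(Tw : ℝ), ?_⟩
    rintro _ ⟨e, rfl⟩
    exact hub e
  rw [fpt, fpt]
  refine ciSup_le fun e => ?_
  refine le_trans ?_ (le_ciSup hbdd e)
  rw [div_le_div_iff_of_pos_right (hppos e)]
  exact_mod_cast numono e
end

section
/- Let p be a prime and f ∈ m ⊂ L[x_1,…,x_n] over a field L of characteristic p. Suppose that the first digit of the base p expansion of fpt(f) is the minimum of all its digits (as holds for any F-pure threshold). If λ = a/b ∈ (0,1] is a rational number in lowest terms with a ≥ 2 and p ≡ c (mod b) where a·c ≡ 1 (mod b), and p is sufficiently large, then λ ≠ fpt(f). Concretely: if a ≥ 2, p·a ≡ 1 mod b is attainable at some power, and p > a·b, then the first base p digit of λ strictly exceeds some later digit, so λ cannot be an F-pure threshold in characteristic p. -/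
open MvPolynomial

lemma ceil_int_div' (m b : ℤ) (hb : 0 < b) (hnd : ¬ b ∣ m) :
    ⌈(m : ℝ) / (b : ℝ)⌉ = m / b + 1 := by
  have hb0 : (0:ℝ) < (b:ℝ) := by exact_mod_cast hb
  have h1 : b * (m / b) < m := by
    have := Int.emod_nonneg m (ne_of_gt hb)
    have h2 : m % b ≠ 0 := fun h => hnd (Int.dvd_of_emod_eq_zero h)
    have := Int.mul_ediv_add_emod m b
    omega
  have h2 : m ≤ b * (m / b) + b := by
    have := Int.emod_lt_of_pos m hb
    have := Int.mul_ediv_add_emod m b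
    omega
  have h1' : ((b : ℝ) * ((m/b : ℤ) : ℝ)) < (m : ℝ) := by exact_mod_cast h1
  have h2' : (m : ℝ) ≤ (b : ℝ) * ((m/b : ℤ) : ℝ) + b := by exact_mod_cast h2
  rw [Int.ceil_eq_iff]
  constructor
  · push_cast
    rw [lt_div_iff₀ hb0]
    nlinarith
  · push_cast
    rw [div_le_iff₀ hb0]
    nlinarith


/-- if the first base `p` digit of `fpt(f)` is minimal among all its
digits, and `λ = a/b ∈ (0,1]` is in lowest terms with `a ≥ 2`, `a·p^e ≡ 1 (mod b)` for
some `e ≥ 1`, and `p > a·b`, then `λ ≠ fpt(f)`. -/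
theorem stmt_14 (p : ℕ) (hp : p.Prime) (n : ℕ) (K : Type*) [Field K] [CharP K p]
    (f : MvPolynomial (Fin n) K) (hfm : f ∈ mIdeal n K) (hf0 : f ≠ 0)
    (hmin : ∀ e, 1 ≤ e → digit p 1 (fpt p f) ≤ digit p e (fpt p f))
    (a b : ℕ) (ha : 2 ≤ a) (hb : 0 < b) (hab : a ≤ b) (hcop : Nat.Coprime a b)
    (hpe : ∃ e, 1 ≤ e ∧ (a * p ^ e) % b = 1 % b)
    (hplarge : a * b < p) :
    (a : ℝ) / b ≠ fpt p f := by
  intro heq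
  rw [← heq] at hmin
  have hane : a ≠ b := by
    rintro rfl
    rw [Nat.Coprime, Nat.gcd_self] at hcop
    omega
  have hb2 : 2 ≤ b := by omega
  have hpb : b < p := by nlinarith
  have hbZ : (0:ℤ) < (b:ℤ) := by exact_mod_cast hb
  have hnd : ∀ k : ℕ, ¬ (b:ℤ) ∣ ((a:ℤ) * (p:ℤ) ^ k) := by
    intro k hdvd
    have hpnd : ¬ p ∣ b := fun h => by have := Nat.le_of_dvd hb h; omega
    have hcp : Nat.Coprime b (a * p ^ k) :=
      (hcop.symm).mul_right ((hp.coprime_iff_not_dvd.mpr hpnd).symm.pow_right k)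
    have hdvd' : b ∣ a * p ^ k := by exact_mod_cast hdvd
    have := Nat.Coprime.eq_one_of_dvd hcp hdvd'
    omega
  have hceil : ∀ k : ℕ, ⌈((a:ℝ)/b) * (p:ℝ)^k⌉ = ((a:ℤ) * (p:ℤ)^k) / b + 1 := by
    intro k
    have heq2 : ((a:ℝ)/b) * (p:ℝ)^k = (((a:ℤ) * (p:ℤ)^k : ℤ) : ℝ) / ((b:ℤ) : ℝ) := by
      push_cast; ring
    rw [heq2, ceil_int_div' _ _ hbZ (hnd k)]
  have hd : ∀ k : ℕ, 1 ≤ k → (b:ℤ) * digit p k ((a:ℝ)/b)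
      = p * (((a:ℤ) * (p:ℤ)^(k-1)) % b) - ((a:ℤ) * (p:ℤ)^k) % b := by
    intro k hk
    obtain ⟨k', rfl⟩ : ∃ k', k = k' + 1 := ⟨k - 1, by omega⟩
    unfold digit
    simp only [Nat.add_sub_cancel]
    rw [hceil (k'+1), hceil k']
    have e1 := Int.mul_ediv_add_emod ((a:ℤ) * (p:ℤ)^(k'+1)) (b:ℤ)
    have e2 := Int.mul_ediv_add_emod ((a:ℤ) * (p:ℤ)^k') (b:ℤ)
    have e3 : (a:ℤ) * (p:ℤ)^(k'+1) = (p:ℤ) * ((a:ℤ) * (p:ℤ)^k') := by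
      rw [pow_succ]; ring
    linear_combination e1 - (p:ℤ) * e2 - e3
  obtain ⟨e, he1, he2⟩ := hpe
  have h1 := hd 1 le_rfl
  have h2 := hd (e+1) (by omega)
  simp only [pow_zero, mul_one, Nat.sub_self, Nat.add_sub_cancel] at h1 h2
  have hr0 : (a:ℤ) % b = a :=
    Int.emod_eq_of_lt (by positivity) (by exact_mod_cast (show a < b by omega))
  have hre : ((a:ℤ) * (p:ℤ)^e) % b = 1 := by
    rw [Nat.mod_eq_of_lt (show 1 < b by omega)] at he2
    exact_mod_cast he2
  rw [hr0] at h1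
  rw [hre] at h2
  have hb1 : 0 ≤ ((a:ℤ) * (p:ℤ)^1) % b := Int.emod_nonneg _ (ne_of_gt hbZ)
  have hb1' : ((a:ℤ) * (p:ℤ)^1) % b < b := Int.emod_lt_of_pos _ hbZ
  have hb2' : 1 ≤ ((a:ℤ) * (p:ℤ)^(e+1)) % b := by
    have := Int.emod_nonneg ((a:ℤ) * (p:ℤ)^(e+1)) (ne_of_gt hbZ)
    have hne : ((a:ℤ) * (p:ℤ)^(e+1)) % b ≠ 0 :=
      fun h => hnd (e+1) (Int.dvd_of_emod_eq_zero h)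
    omega
  have hmono := hmin (e+1) (by omega)
  have hle : (b:ℤ) * digit p 1 ((a:ℝ)/b) ≤ (b:ℤ) * digit p (e+1) ((a:ℝ)/b) :=
    mul_le_mul_of_nonneg_left hmono (le_of_lt hbZ)
  rw [h1, h2] at hle
  have hpA : 2 * (p:ℤ) ≤ (p:ℤ) * a := by
    have : (2:ℤ) ≤ a := by exact_mod_cast ha
    nlinarith [Int.natCast_nonneg p]
  have hpbZ : (b:ℤ) < p := by exact_mod_cast hpb
  linarith
end

section
/- Let p be a prime and λ = a/b ∈ (0,1] in lowest terms with a ≥ 2. Suppose e ≥ 1 satisfies a·p^e ≡ 1 (mod b), and suppose p > a·b. Then the (e+1)-st digit of the non-terminating base p expansion of λ is strictly smaller than the first digit: λ^{(e+1)} < λ^{(1)}. -/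
open MvPolynomial

lemma ceil_div_int' (m b : ℤ) (hb : 0 < b) (hr : m % b ≠ 0) :
    ⌈(m : ℝ) / b⌉ = m / b + 1 := by
  have h0 : (0:ℝ) < (b:ℝ) := by exact_mod_cast hb
  have hrlt : m % b < b := Int.emod_lt_of_pos m hb
  have hrpos : 0 < m % b := lt_of_le_of_ne (Int.emod_nonneg m hb.ne') (Ne.symm hr)
  have hmeq : m = b * (m / b) + m % b := (Int.mul_ediv_add_emod m b).symm
  have h1 : b * (m / b) < m := by linarith
  have h2 : m ≤ b * (m / b) + b := by linarith
  have h1' : (b:ℝ) * ((m / b : ℤ) : ℝ) < (m:ℝ) := by exact_mod_cast h1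
  have h2' : (m:ℝ) ≤ (b:ℝ) * ((m / b : ℤ) : ℝ) + b := by exact_mod_cast h2
  rw [Int.ceil_eq_iff]
  constructor
  · rw [lt_div_iff₀ h0]; push_cast; linarith
  · rw [div_le_iff₀ h0]; push_cast; linarith

/-- for `λ = a/b ∈ (0,1]` in lowest terms with `a ≥ 2`, if
`a·p^e ≡ 1 (mod b)` and `p > a·b`, then `λ^{(e+1)} < λ^{(1)}` (base `p` digits). -/
theorem stmt_15 (p : ℕ) (hp : p.Prime) (a b : ℕ) (ha : 2 ≤ a) (hb : 0 < b)
    (hab : a ≤ b) (hcop : Nat.Coprime a b)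
    (e : ℕ) (he : 1 ≤ e) (hpe : (a * p ^ e) % b = 1 % b)
    (hplarge : a * b < p) :
    digit p (e + 1) ((a : ℝ) / b) < digit p 1 ((a : ℝ) / b) := by

  have halt : a < b := by
    rcases lt_or_eq_of_le hab with h | h
    · exact h
    · exfalso; subst h; simp [Nat.Coprime, Nat.gcd_self] at hcop; omega
  have hb3 : 2 < b := by omega
  have hbp : b < p := by nlinarith
  have hBpos : (0:ℤ) < (b:ℤ) := by exact_mod_cast hb
  have hcoppb : Nat.Coprime p b := (Nat.Prime.coprime_iff_not_dvd hp).mpr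
      (Nat.not_dvd_of_pos_of_lt hb hbp)
  have hkey : ∀ j : ℕ, ⌈(a:ℝ)/b * (p:ℝ)^j⌉ = ((a:ℤ) * (p:ℤ)^j) / (b:ℤ) + 1 := by
    intro j
    have hco : Nat.Coprime (a * p^j) b := Nat.Coprime.mul hcop (Nat.Coprime.pow_left j hcoppb)
    have hnd : ¬ (b:ℤ) ∣ (a:ℤ) * (p:ℤ)^j := by
      intro h
      have h2 : b ∣ a * p^j := by exact_mod_cast h
      have hone : b ∣ 1 := hco ▸ Nat.dvd_gcd h2 dvd_rfl
      have := Nat.le_of_dvd one_pos hone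
      omega
    have hne : ((a:ℤ) * (p:ℤ)^j) % (b:ℤ) ≠ 0 := fun h => hnd (Int.dvd_of_emod_eq_zero h)
    have hcast : (a:ℝ)/b * (p:ℝ)^j = (((a:ℤ) * (p:ℤ)^j : ℤ) : ℝ) / ((b:ℤ) : ℝ) := by
      push_cast; ring
    rw [hcast, ceil_div_int' _ _ hBpos hne]
  have hQr : ∀ j : ℕ, (b:ℤ) * (((a:ℤ) * (p:ℤ)^j) / (b:ℤ)) + ((a:ℤ) * (p:ℤ)^j) % (b:ℤ)
      = (a:ℤ) * (p:ℤ)^j := fun j => Int.mul_ediv_add_emod _ _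
  have hre : ((a:ℤ) * (p:ℤ)^e) % (b:ℤ) = 1 := by
    have h1 : (a * p ^ e) % b = 1 := by rw [hpe]; exact Nat.mod_eq_of_lt (by omega)
    have h2 := Int.natCast_mod (a * p ^ e) b
    rw [h1] at h2
    push_cast at h2
    exact h2.symm
  have hQ0 : ((a:ℤ) * (p:ℤ)^0) / (b:ℤ) = 0 := by
    apply Int.ediv_eq_zero_of_lt
    · positivity
    · simpa using (by exact_mod_cast halt : (a:ℤ) < (b:ℤ))
  rw [digit, digit]
  simp only [Nat.add_sub_cancel, Nat.sub_self]
  rw [hkey (e+1), hkey e, hkey 1, hkey 0, hQ0]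
  set Q1 := ((a:ℤ) * (p:ℤ)^1) / (b:ℤ) with hQ1def
  set Qe := ((a:ℤ) * (p:ℤ)^e) / (b:ℤ) with hQedef
  set Qe1 := ((a:ℤ) * (p:ℤ)^(e+1)) / (b:ℤ) with hQe1def
  set r1 := ((a:ℤ) * (p:ℤ)^1) % (b:ℤ) with hr1def
  set re1 := ((a:ℤ) * (p:ℤ)^(e+1)) % (b:ℤ) with hre1def
  have h1 : (b:ℤ) * Qe1 + re1 = (a:ℤ) * (p:ℤ)^(e+1) := hQr (e+1)
  have h2 : (b:ℤ) * Qe + 1 = (a:ℤ) * (p:ℤ)^e := by have := hQr e; rw [hre] at this; exact this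
  have h3 : (b:ℤ) * Q1 + r1 = (a:ℤ) * (p:ℤ)^1 := hQr 1
  have hu : (a:ℤ) * (p:ℤ)^(e+1) = (p:ℤ) * ((a:ℤ) * (p:ℤ)^e) := by ring
  have key1 : (b:ℤ) * (Qe1 - (p:ℤ) * Qe) = (p:ℤ) - re1 := by
    linear_combination h1 - (p:ℤ) * h2 + hu
  have key2 : (b:ℤ) * Q1 = (a:ℤ) * (p:ℤ) - r1 := by linear_combination h3
  have hre1nn : 0 ≤ re1 := Int.emod_nonneg _ hBpos.ne'
  have hr1lt : r1 < (b:ℤ) := Int.emod_lt_of_pos _ hBpos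
  have hbpZ : (b:ℤ) < (p:ℤ) := by exact_mod_cast hbp
  have haZ : (2:ℤ) ≤ (a:ℤ) := by exact_mod_cast ha
  have h2p : 2 * (p:ℤ) ≤ (a:ℤ) * (p:ℤ) :=
    mul_le_mul_of_nonneg_right haZ (by positivity)
  have final : (b:ℤ) * (Qe1 - (p:ℤ) * Qe) < (b:ℤ) * Q1 := by
    rw [key1, key2]; linarith
  have := lt_of_mul_lt_mul_left final hBpos.le
  linarith
end

section
/- Let p be a prime, L a field of characteristic p, and R = L[x_1,…,x_n] with ℕ-grading deg x_i = w_i > 0. Let N := n·d − 2·Σ w_i for some d, and suppose I is an ideal containing all homogeneous elements of degree ≥ N+1. Then every monomial μ in the colon ideal (m^{[p^e]} : R_{≥N+1}) that is not in m^{[p^e]} has degree ≥ (p^e − 1)·Σ w_i − N. -/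
open MvPolynomial

lemma mem_frob_iff (p n : ℕ) (K : Type*) [Field K] (e : ℕ) (v : Fin n →₀ ℕ) :
    monomial v (1 : K) ∈ frobPow p n K e ↔ ∃ i, p ^ e ≤ v i := by
  have h1 : frobPow p n K e = Ideal.span ((fun s => monomial s (1 : K)) ''
      (Set.range fun i : Fin n => Finsupp.single i (p ^ e))) := by
    rw [frobPow]
    congr 1
    rw [← Set.range_comp]
    refine congrArg _ (funext fun i => ?_)
    simp [X_pow_eq_monomial]
  rw [h1, mem_ideal_span_monomial_image]
  simp [support_monomial, Finsupp.single_le_iff]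

/-- with `N = n·d − 2·Σ w_i`, every monomial in the colon ideal
`(m^{[p^e]} : R_{≥ N+1})` which is not in `m^{[p^e]}` has degree `≥ (p^e − 1)Σ w_i − N`. -/
theorem stmt_17 (p : ℕ) (hp : p.Prime) (n : ℕ) (K : Type*) [Field K] [CharP K p]
    (w : Fin n → ℕ) (hw : ∀ i, 0 < w i) (d : ℕ)
    (N : ℤ) (hN : N = (n * d : ℤ) - 2 * ∑ i, (w i : ℤ))
    (e : ℕ)
    (Rge : Ideal (MvPolynomial (Fin n) K))
    (hRge : Rge = Ideal.span
      {h | ∃ dd : ℕ, N + 1 ≤ (dd : ℤ) ∧ h.IsWeightedHomogeneous w dd})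
    (u : Fin n →₀ ℕ)
    (hu : (monomial u (1 : K)) ∈ Submodule.colon (frobPow p n K e) Rge)
    (hnot : (monomial u (1 : K)) ∉ frobPow p n K e) :
    ((p : ℤ) ^ e - 1) * (∑ i, (w i : ℤ)) - N ≤ ∑ i, (u i : ℤ) * w i := by
  by_contra hcon
  push_neg at hcon
  have hp1 : 1 ≤ p ^ e := Nat.one_le_pow _ _ hp.pos
  have hue : ∀ i, u i ≤ p ^ e - 1 := by
    intro i
    by_contra hc
    exact hnot ((mem_frob_iff p n K e u).mpr ⟨i, by omega⟩)
  set s : Fin n →₀ ℕ := Finsupp.equivFunOnFinite.symm (fun i => p ^ e - 1 - u i) with hs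
  have hsi : ∀ i, s i = p ^ e - 1 - u i := fun i => rfl
  set D : ℕ := ∑ i, (p ^ e - 1 - u i) * w i with hDdef
  have hwt : IsWeightedHomogeneous w (monomial s (1 : K)) D := by
    refine isWeightedHomogeneous_monomial w s 1 ?_
    rw [Finsupp.weight_apply, Finsupp.sum_fintype]
    · exact Finset.sum_congr rfl fun i _ => by simp [hsi i, smul_eq_mul]
    · intro i; simp
  have hDcast : (D : ℤ) = ((p : ℤ) ^ e - 1) * (∑ i, (w i : ℤ)) - ∑ i, (u i : ℤ) * w i := by
    have h2 : (D : ℤ) = ∑ i, ((p : ℤ) ^ e - 1 - u i) * w i := by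
      rw [hDdef, Nat.cast_sum]
      refine Finset.sum_congr rfl fun i _ => ?_
      have := hue i
      push_cast [Nat.cast_sub (hue i), Nat.cast_sub hp1]
      ring
    rw [h2]
    rw [Finset.sum_congr rfl (fun i (_ : i ∈ Finset.univ) => sub_mul ((p:ℤ)^e - 1) (u i : ℤ) (w i : ℤ)),
        Finset.sum_sub_distrib, Finset.mul_sum]
  have hND : N + 1 ≤ (D : ℤ) := by omega
  have hmem : monomial s (1 : K) ∈ Rge := by
    rw [hRge]
    exact Ideal.subset_span ⟨D, hND, hwt⟩
  have key := Submodule.mem_colon.mp hu _ hmem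
  rw [smul_eq_mul, monomial_mul, one_mul] at key
  obtain ⟨i, hi⟩ := (mem_frob_iff p n K e (u + s)).mp key
  have : (u + s) i = u i + (p ^ e - 1 - u i) := rfl
  have := hue i
  omega
end
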